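/- arXiv:2407.11932 — 2 statements merged into one kernel-verified Lean document; each statement's English description precedes it below -/
import Mathlib

section
/- Let n, d be positive integers and let A, B ∈ ℝ^{n×d}. Then ℓ(A, B) ≤ (1/n) · ‖A Aᵀ − B Bᵀ‖_*; that is, (1/n) · inf_{O ∈ O(d)} ‖A − B O‖_F² is at most 1/n times the nuclear norm of A Aᵀ − B Bᵀ. -/
open Matrix

noncomputable section

/-- Squared Frobenius distance `‖A − B‖_F²`. -/
def frobSq {n m : ℕ} (A B : Matrix (Fin n) (Fin m) ℝ) : ℝ :=
  ∑ i, ∑ j, (A i j - B i j) ^ 2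

/-- The loss `ℓ(A, B) = (1/n) inf_{O ∈ O(d)} ‖A − B O‖_F²`. -/
def lossEll (n d : ℕ) (A B : Matrix (Fin n) (Fin d) ℝ) : ℝ :=
  (1 / n) * sInf ((fun O => frobSq A (B * O)) '' {O | O ∈ Matrix.orthogonalGroup (Fin d) ℝ})

/-- The nuclear norm of a real square matrix: the sum of its singular values,
i.e. of the square roots of the eigenvalues of `Mᵀ M = Mᴴ M`. -/
def nuclearNorm {n : ℕ} (M : Matrix (Fin n) (Fin n) ℝ) : ℝ :=
  ∑ i, Real.sqrt ((show (Mᵀ * M).IsHermitian by simpa using Matrix.isHermitian_conjTranspose_mul_self M).eigenvalues i)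

open scoped MatrixOrder in
lemma psd_eq_of_sq_eq_sq {k : ℕ} {X Y : Matrix (Fin k) (Fin k) ℝ} (hX : X.PosSemidef)
    (hY : Y.PosSemidef) (h : X ^ 2 = Y ^ 2) : X = Y :=
  (CFC.sq_eq_sq_iff X Y hX.nonneg hY.nonneg).mp h

namespace LossProof

variable {k : ℕ}

/-- congruence by eigenvector unitary -/
def cong {F : Matrix (Fin k) (Fin k) ℝ} (hF : F.IsHermitian) (w : Fin k → ℝ) :
    Matrix (Fin k) (Fin k) ℝ :=
  (hF.eigenvectorUnitary : Matrix (Fin k) (Fin k) ℝ) * diagonal w *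
    star (hF.eigenvectorUnitary : Matrix (Fin k) (Fin k) ℝ)

variable {F : Matrix (Fin k) (Fin k) ℝ} (hF : F.IsHermitian)

lemma star_mul_self_U : star (hF.eigenvectorUnitary : Matrix (Fin k) (Fin k) ℝ) *
    (hF.eigenvectorUnitary : Matrix (Fin k) (Fin k) ℝ) = 1 :=
  Matrix.mem_unitaryGroup_iff'.mp hF.eigenvectorUnitary.2

lemma mul_star_self_U : (hF.eigenvectorUnitary : Matrix (Fin k) (Fin k) ℝ) *
    star (hF.eigenvectorUnitary : Matrix (Fin k) (Fin k) ℝ) = 1 :=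
  Matrix.mem_unitaryGroup_iff.mp hF.eigenvectorUnitary.2

lemma cong_mul_cong (v w : Fin k → ℝ) :
    cong hF v * cong hF w = cong hF (fun i => v i * w i) := by
  unfold cong
  set U : Matrix (Fin k) (Fin k) ℝ := (hF.eigenvectorUnitary : Matrix (Fin k) (Fin k) ℝ) with hU
  have h1 : U * diagonal v * star U * (U * diagonal w * star U)
      = U * diagonal v * (star U * U) * diagonal w * star U := by noncomm_ring
  rw [h1, star_mul_self_U, mul_one, mul_assoc U (diagonal v) (diagonal w),
    diagonal_mul_diagonal]

lemma cong_congr {v w : Fin k → ℝ} (h : ∀ i, v i = w i) : cong hF v = cong hF w := by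
  rw [funext h]

lemma cong_one : cong hF (fun _ => 1) = 1 := by
  unfold cong
  rw [diagonal_one, mul_one, mul_star_self_U]

lemma trace_mul_diagonal (R : Matrix (Fin k) (Fin k) ℝ) (w : Fin k → ℝ) :
    trace (R * diagonal w) = ∑ i, w i * R i i := by
  simp [trace, diag, mul_apply, diagonal, mul_comm]

lemma trace_mul_cong (M : Matrix (Fin k) (Fin k) ℝ) (w : Fin k → ℝ) :
    trace (M * cong hF w) =
      ∑ i, w i * (star (hF.eigenvectorUnitary : Matrix (Fin k) (Fin k) ℝ) * M *
        (hF.eigenvectorUnitary : Matrix (Fin k) (Fin k) ℝ)) i i := by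
  unfold cong
  rw [show M * ((hF.eigenvectorUnitary : Matrix (Fin k) (Fin k) ℝ) * diagonal w *
      star (hF.eigenvectorUnitary : Matrix (Fin k) (Fin k) ℝ)) =
      (M * (hF.eigenvectorUnitary : Matrix (Fin k) (Fin k) ℝ) * diagonal w) *
      star (hF.eigenvectorUnitary : Matrix (Fin k) (Fin k) ℝ) from by noncomm_ring,
    trace_mul_comm, ← mul_assoc, ← mul_assoc, trace_mul_diagonal]

lemma trace_cong (w : Fin k → ℝ) : trace (cong hF w) = ∑ i, w i := by
  have := trace_mul_cong hF 1 w
  rw [one_mul] at this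
  rw [this]
  congr 1; ext i
  rw [mul_one, star_mul_self_U, one_apply_eq, mul_one]

lemma conj_U_self : star (hF.eigenvectorUnitary : Matrix (Fin k) (Fin k) ℝ) * F *
    (hF.eigenvectorUnitary : Matrix (Fin k) (Fin k) ℝ) = diagonal hF.eigenvalues := by
  have := hF.conjStarAlgAut_star_eigenvectorUnitary
  rw [Unitary.conjStarAlgAut_star_apply] at this
  rwa [RCLike.ofReal_real_eq_id, Function.id_comp] at this

lemma cong_eigenvalues : cong hF hF.eigenvalues = F := by
  have := hF.spectral_theorem
  rw [RCLike.ofReal_real_eq_id, Function.id_comp] at this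
  exact this.symm

lemma cong_mul_mid (v w : Fin k → ℝ) :
    cong hF v * F * cong hF w = cong hF (fun i => v i * (hF.eigenvalues i * w i)) := by
  have e : cong hF v * F * cong hF w = cong hF v * cong hF hF.eigenvalues * cong hF w := by
    rw [cong_eigenvalues]
  rw [e, cong_mul_cong, cong_mul_cong]
  exact cong_congr hF fun i => by ring

lemma cong_isHermitian (w : Fin k → ℝ) : (cong hF w).IsHermitian := by
  unfold cong Matrix.IsHermitian
  simp only [star_eq_conjTranspose, conjTranspose_mul, conjTranspose_conjTranspose,
    diagonal_conjTranspose]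
  rw [show star w = w from funext fun i => star_trivial _, mul_assoc]

lemma cong_transpose (w : Fin k → ℝ) : (cong hF w)ᵀ = cong hF w := by
  have h : (cong hF w)ᴴ = cong hF w := cong_isHermitian hF w
  ext i j
  rw [transpose_apply]
  conv_rhs => rw [← h]
  simp [conjTranspose_apply]

lemma cong_posSemidef {w : Fin k → ℝ} (hw : ∀ i, 0 ≤ w i) : (cong hF w).PosSemidef := by
  unfold cong
  rw [star_eq_conjTranspose]
  exact (Matrix.PosSemidef.diagonal (fun i => hw i)).mul_mul_conjTranspose_same _

lemma cong_sub (v w : Fin k → ℝ) : cong hF v - cong hF w = cong hF (fun i => v i - w i) := by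
  unfold cong
  rw [← Matrix.sub_mul, ← Matrix.mul_sub, ← diagonal_sub]

lemma psd_diag_nonneg {M : Matrix (Fin k) (Fin k) ℝ} (hM : M.PosSemidef) (i : Fin k) :
    0 ≤ M i i := by
  exact hM.diag_nonneg

lemma psd_conj_diag_nonneg {M : Matrix (Fin k) (Fin k) ℝ} (hM : M.PosSemidef) (i : Fin k) :
    0 ≤ (star (hF.eigenvectorUnitary : Matrix (Fin k) (Fin k) ℝ) * M *
      (hF.eigenvectorUnitary : Matrix (Fin k) (Fin k) ℝ)) i i := by
  rw [star_eq_conjTranspose]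
  exact psd_diag_nonneg (hM.conjTranspose_mul_mul_same _) i

section LemmaI

variable {d : ℕ}

lemma dp_sq_le (x y : Fin d → ℝ) : (x ⬝ᵥ y)^2 ≤ (x ⬝ᵥ x) * (y ⬝ᵥ y) := by
  have h := Finset.sum_mul_sq_le_sq_mul_sq Finset.univ x y
  simpa [dotProduct, pow_two] using h

lemma psd_smul {M : Matrix (Fin d) (Fin d) ℝ} (hM : M.PosSemidef) {c : ℝ} (hc : 0 ≤ c) :
    (c • M).PosSemidef := by
  refine PosSemidef.of_dotProduct_mulVec_nonneg ?_ fun x => ?_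
  · show (c • M)ᴴ = c • M
    rw [conjTranspose_smul, star_trivial, hM.1]
  · simpa [smul_mulVec, smul_eq_mul] using mul_nonneg hc (hM.dotProduct_mulVec_nonneg x)

lemma contraction_dp {C : Matrix (Fin d) (Fin d) ℝ} (hC : (1 - Cᵀ*C).PosSemidef)
    (x : Fin d → ℝ) : (C *ᵥ x) ⬝ᵥ (C *ᵥ x) ≤ x ⬝ᵥ x := by
  have h := hC.dotProduct_mulVec_nonneg x
  have e : x ⬝ᵥ ((Cᵀ*C) *ᵥ x) = (C *ᵥ x) ⬝ᵥ (C *ᵥ x) := by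
    rw [← mulVec_mulVec, dotProduct_mulVec, vecMul_transpose]
  simp only [sub_mulVec, one_mulVec, dotProduct_sub, star_trivial] at h
  rw [e] at h
  linarith

lemma psd_two_add_sym {C : Matrix (Fin d) (Fin d) ℝ} (hC : (1 - Cᵀ*C).PosSemidef) :
    (C + Cᵀ + (2:ℝ) • (1 : Matrix (Fin d) (Fin d) ℝ)).PosSemidef := by
  refine PosSemidef.of_dotProduct_mulVec_nonneg ?_ fun x => ?_
  · show (C + Cᵀ + (2:ℝ) • (1 : Matrix (Fin d) (Fin d) ℝ))ᴴ = _
    simp only [conjTranspose_add, conjTranspose_smul, conjTranspose_eq_transpose_of_trivial,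
      transpose_add, transpose_smul, transpose_transpose, transpose_one, star_trivial]
    abel
  · have hb := contraction_dp hC x
    have hcs := dp_sq_le x (C *ᵥ x)
    have hxx : 0 ≤ x ⬝ᵥ x := by
      simpa [dotProduct, pow_two] using Finset.sum_nonneg
        (fun i (_ : i ∈ Finset.univ) => mul_self_nonneg (x i))
    have e : x ⬝ᵥ (Cᵀ *ᵥ x) = x ⬝ᵥ (C *ᵥ x) := by
      rw [dotProduct_mulVec, vecMul_transpose, dotProduct_comm]
    simp only [add_mulVec, smul_mulVec, one_mulVec, dotProduct_add, dotProduct_smul,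
      star_trivial, smul_eq_mul, e]
    nlinarith [hcs, hb, hxx]

lemma det_shift_ne (C : Matrix (Fin d) (Fin d) ℝ) {t₀ : ℝ} (ht₀ : 0 < t₀) :
    ∃ t : ℝ, 0 < t ∧ t < t₀ ∧ det (C - t • 1) ≠ 0 := by
  have hm : (Matrix.charpoly C).Monic := Matrix.charpoly_monic C
  have hp0 : Matrix.charpoly C ≠ 0 := hm.ne_zero
  have hfin : {t : ℝ | (Matrix.charpoly C).IsRoot t}.Finite := Polynomial.finite_setOf_isRoot hp0
  have hinf : (Set.Ioo (0:ℝ) t₀).Infinite := Set.infinite_coe_iff.mp (Set.Ioo.infinite ht₀)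
  obtain ⟨t, ht⟩ := (hinf.diff hfin).nonempty
  refine ⟨t, ht.1.1, ht.1.2, ?_⟩
  have heval : Polynomial.eval t (Matrix.charpoly C) = det (t • (1 : Matrix (Fin d) (Fin d) ℝ) - C) := by
    rw [Matrix.charpoly, eval_det, Matrix.matPolyEquiv_charmatrix]
    congr 1
    rw [Polynomial.eval_sub, Polynomial.eval_X, Polynomial.eval_C]
    congr 1
    ext i j
    simp [Matrix.scalar, Matrix.smul_apply, Matrix.one_apply, Matrix.diagonal]
  have hroot : Polynomial.eval t (Matrix.charpoly C) ≠ 0 := ht.2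
  have : det (t • (1 : Matrix (Fin d) (Fin d) ℝ) - C) ≠ 0 := heval ▸ hroot
  intro hcon
  apply this
  have hneg : C - t • 1 = -(t • (1 : Matrix (Fin d) (Fin d) ℝ) - C) := by abel
  rw [hneg, Matrix.det_neg] at hcon
  rcases mul_eq_zero.mp hcon with h | h
  · exact absurd h (pow_ne_zero _ (by norm_num))
  · exact h

lemma contraction_shift {C : Matrix (Fin d) (Fin d) ℝ} (hC : (1 - Cᵀ*C).PosSemidef)
    {t : ℝ} (ht : 0 ≤ t) :
    (1 - ((1+t)⁻¹ • (C - t • 1))ᵀ * ((1+t)⁻¹ • (C - t • 1))).PosSemidef := by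
  have hne : (1+t) ≠ 0 := by positivity
  have key : (1 : Matrix (Fin d) (Fin d) ℝ) - ((1+t)⁻¹ • (C - t • 1))ᵀ * ((1+t)⁻¹ • (C - t • 1))
      = ((1+t)⁻¹ * (1+t)⁻¹) • ((1 - Cᵀ*C) + t • (C + Cᵀ + (2:ℝ) • 1)) := by
    have e1 : ((1+t)⁻¹ • (C - t • 1))ᵀ * ((1+t)⁻¹ • (C - t • 1))
        = ((1+t)⁻¹ * (1+t)⁻¹) • ((Cᵀ - t • 1) * (C - t • 1)) := by
      rw [transpose_smul, transpose_sub, transpose_smul, transpose_one, Matrix.smul_mul,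
        Matrix.mul_smul, smul_smul]
    rw [e1]
    have e2 : (Cᵀ - t • (1 : Matrix (Fin d) (Fin d) ℝ)) * (C - t • 1)
        = Cᵀ*C - t • C - t • Cᵀ + (t*t) • 1 := by
      simp only [sub_mul, mul_sub, Matrix.smul_mul, Matrix.mul_smul, Matrix.mul_one,
        Matrix.one_mul, smul_smul]
      abel
    rw [e2]
    have hsc : ((1+t)⁻¹ * (1+t)⁻¹) * ((1+t)*(1+t)) = 1 := by field_simp
    have expand : (1 : Matrix (Fin d) (Fin d) ℝ) = ((1+t)⁻¹ * (1+t)⁻¹) • (((1+t)*(1+t)) • (1 : Matrix (Fin d) (Fin d) ℝ)) := by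
      rw [smul_smul, hsc, one_smul]
    nth_rewrite 1 [expand]
    rw [← smul_sub]
    congr 1
    module
  rw [key]
  exact psd_smul ((hC.add (psd_smul (psd_two_add_sym hC) ht))) (by positivity)

lemma exists_orth_approx (N C : Matrix (Fin d) (Fin d) ℝ) (hC : (1 - Cᵀ*C).PosSemidef)
    {ε : ℝ} (hε : 0 < ε) :
    ∃ Z ∈ Matrix.orthogonalGroup (Fin d) ℝ, trace (N * C) ≤ trace (N * Z) + ε := by
  set x := trace (N * C) with hx
  set y := trace N with hy
  have hden : (0:ℝ) < ε / (1 + |x| + |y|) := by positivity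
  obtain ⟨t, ht0, ht1, hdet⟩ := det_shift_ne C (lt_min one_pos hden)
  have htle1 : t ≤ 1 := le_of_lt (lt_of_lt_of_le ht1 (min_le_left _ _))
  have htle2 : t * (1 + |x| + |y|) ≤ ε := by
    have h := le_of_lt (lt_of_lt_of_le ht1 (min_le_right _ _))
    rw [div_eq_mul_inv] at h
    have hpos : (0:ℝ) < 1 + |x| + |y| := by positivity
    calc t * (1 + |x| + |y|) ≤ ε * (1 + |x| + |y|)⁻¹ * (1 + |x| + |y|) := by
          exact mul_le_mul_of_nonneg_right h (le_of_lt hpos)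
      _ = ε := by field_simp
  have hne : (1+t) ≠ 0 := by positivity
  set Ct : Matrix (Fin d) (Fin d) ℝ := (1+t)⁻¹ • (C - t • 1) with hCt
  have hCtcon : (1 - Ctᵀ * Ct).PosSemidef := contraction_shift hC (le_of_lt ht0)
  set G : Matrix (Fin d) (Fin d) ℝ := Ctᵀ * Ct with hGdef
  have hGpsd : G.PosSemidef := by
    have := Matrix.posSemidef_conjTranspose_mul_self Ct
    rwa [conjTranspose_eq_transpose_of_trivial] at this
  have hG : G.IsHermitian := hGpsd.1
  have hdetG : det G ≠ 0 := by
    have hdetCt : det Ct ≠ 0 := by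
      rw [hCt, Matrix.det_smul]
      exact mul_ne_zero (pow_ne_zero _ (inv_ne_zero hne)) hdet
    rw [hGdef, Matrix.det_mul, Matrix.det_transpose]
    exact mul_ne_zero hdetCt hdetCt
  have hμ0 : ∀ i, 0 ≤ hG.eigenvalues i := hGpsd.eigenvalues_nonneg
  have hμne : ∀ i, hG.eigenvalues i ≠ 0 := by
    intro i
    have hprod := hG.det_eq_prod_eigenvalues
    intro hzero
    apply hdetG
    rw [hprod]
    rw [Finset.prod_eq_zero (Finset.mem_univ i)]
    rw [hzero]
    norm_num
  have hμ1 : ∀ i, hG.eigenvalues i ≤ 1 := by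
    intro i
    have hpsd1 := psd_conj_diag_nonneg hG hCtcon i
    have hexp : star (hG.eigenvectorUnitary : Matrix (Fin d) (Fin d) ℝ) * (1 - G) *
        (hG.eigenvectorUnitary : Matrix (Fin d) (Fin d) ℝ)
        = 1 - diagonal hG.eigenvalues := by
      rw [Matrix.mul_sub, Matrix.sub_mul, Matrix.mul_one, star_mul_self_U, conj_U_self]
    rw [hexp] at hpsd1
    simp only [Matrix.sub_apply, Matrix.one_apply_eq, Matrix.diagonal_apply_eq] at hpsd1
    linarith
  set H : Matrix (Fin d) (Fin d) ℝ := cong hG (fun i => Real.sqrt (hG.eigenvalues i)) with hH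
  set Hi : Matrix (Fin d) (Fin d) ℝ := cong hG (fun i => (Real.sqrt (hG.eigenvalues i))⁻¹) with hHi
  set O' : Matrix (Fin d) (Fin d) ℝ := Ct * Hi with hO'
  have hsqne : ∀ i, Real.sqrt (hG.eigenvalues i) ≠ 0 := fun i =>
    ne_of_gt (Real.sqrt_pos.mpr (lt_of_le_of_ne (hμ0 i) (Ne.symm (hμne i))))
  have hHisym : Hiᵀ = Hi := by
    rw [hHi]
    exact cong_transpose hG _
  have hOO : O'ᵀ * O' = 1 := by
    rw [hO', transpose_mul, hHisym]
    have e : Hi * Ctᵀ * (Ct * Hi) = Hi * G * Hi := by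
      rw [hGdef]; noncomm_ring
    rw [e, hHi, cong_mul_mid]
    rw [show (fun i => (Real.sqrt (hG.eigenvalues i))⁻¹ * (hG.eigenvalues i *
        (Real.sqrt (hG.eigenvalues i))⁻¹)) = fun _ => (1:ℝ) from funext fun i => by
      rw [inv_mul_eq_div, div_eq_one_iff_eq (hsqne i), ← div_eq_mul_inv, div_eq_iff (hsqne i),
        Real.mul_self_sqrt (hμ0 i)]]
    exact cong_one hG
  have hfact : O' * H = Ct := by
    rw [hO', mul_assoc, hHi, hH, cong_mul_cong]
    rw [show (fun i => (Real.sqrt (hG.eigenvalues i))⁻¹ * Real.sqrt (hG.eigenvalues i))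
      = fun _ => 1 from funext fun i => inv_mul_cancel₀ (hsqne i)]
    rw [cong_one, Matrix.mul_one]
  set R : Matrix (Fin d) (Fin d) ℝ := star (hG.eigenvectorUnitary : Matrix (Fin d) (Fin d) ℝ) *
    (N * O') * (hG.eigenvectorUnitary : Matrix (Fin d) (Fin d) ℝ) with hR
  have htr1 : trace (N * Ct) = ∑ i, Real.sqrt (hG.eigenvalues i) * R i i := by
    rw [← hfact, ← mul_assoc, hH, trace_mul_cong]
  set s : Fin d → ℝ := fun i => if 0 ≤ R i i then 1 else -1 with hs
  set Z : Matrix (Fin d) (Fin d) ℝ := O' * cong hG s with hZ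
  have hZmem : Z ∈ Matrix.orthogonalGroup (Fin d) ℝ := by
    apply Matrix.mem_unitaryGroup_iff'.mpr
    have hstar : star Z = cong hG s * O'ᵀ := by
      rw [hZ, star_eq_conjTranspose, conjTranspose_mul, conjTranspose_eq_transpose_of_trivial,
        conjTranspose_eq_transpose_of_trivial, cong_transpose]
    rw [hstar, hZ]
    have e : cong hG s * O'ᵀ * (O' * cong hG s) = cong hG s * (O'ᵀ * O') * cong hG s := by
      noncomm_ring
    rw [e, hOO, Matrix.mul_one, cong_mul_cong]
    rw [show (fun i => s i * s i) = fun _ => 1 from funext fun i => by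
      rw [hs]; dsimp only; split <;> norm_num]
    exact cong_one hG
  have htr2 : trace (N * Z) = ∑ i, s i * R i i := by
    rw [hZ, ← mul_assoc, trace_mul_cong]
  have hstep : trace (N * Ct) ≤ trace (N * Z) := by
    rw [htr1, htr2]
    apply Finset.sum_le_sum
    intro i _
    have h1 : Real.sqrt (hG.eigenvalues i) ≤ 1 := Real.sqrt_le_one.mpr (hμ1 i)
    have h2 : 0 ≤ Real.sqrt (hG.eigenvalues i) := Real.sqrt_nonneg _
    rw [hs]; dsimp only
    split
    · next hpos => nlinarith
    · next hneg =>
      push_neg at hneg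
      nlinarith
  have htr3 : trace (N * Ct) = (1+t)⁻¹ * (x - t * y) := by
    rw [hCt, Matrix.mul_smul, trace_smul, Matrix.mul_sub, Matrix.mul_smul, Matrix.mul_one,
      trace_sub, trace_smul]
    simp [smul_eq_mul, hx, hy]
  have hfinal : x ≤ trace (N * Ct) + ε := by
    rw [htr3]
    have hxb : x ≤ |x| := le_abs_self x
    have hyb : -|y| ≤ y := neg_abs_le y
    have hyb2 : y ≤ |y| := le_abs_self y
    have hxb2 : -|x| ≤ x := neg_abs_le x
    have h1t : (0:ℝ) < 1 + t := by positivity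
    rw [← sub_le_iff_le_add]
    rw [show x - ε ≤ (1+t)⁻¹ * (x - t*y) ↔ (x - ε) * (1+t) ≤ (x - t*y) from by
      rw [← div_eq_inv_mul, le_div_iff₀ h1t]]
    nlinarith
  exact ⟨Z, hZmem, le_trans hfinal (by linarith)⟩

end LemmaI

section LemmaII

variable {k : ℕ}

lemma sqrt_cong_sq {P : Matrix (Fin k) (Fin k) ℝ} (hP : P.PosSemidef) :
    cong hP.1 (fun i => Real.sqrt (hP.1.eigenvalues i)) *
      cong hP.1 (fun i => Real.sqrt (hP.1.eigenvalues i)) = P := by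
  rw [cong_mul_cong]
  rw [show (fun i => Real.sqrt (hP.1.eigenvalues i) * Real.sqrt (hP.1.eigenvalues i))
    = hP.1.eigenvalues from funext fun i => Real.mul_self_sqrt (hP.eigenvalues_nonneg i)]
  exact cong_eigenvalues hP.1

lemma powers_stormer {P Q : Matrix (Fin k) (Fin k) ℝ} (hP : P.PosSemidef) (hQ : Q.PosSemidef) :
    trace P + trace Q - 2 * trace (cong hP.1 (fun i => Real.sqrt (hP.1.eigenvalues i)) *
      cong hQ.1 (fun i => Real.sqrt (hQ.1.eigenvalues i)))
    ≤ ∑ i, Real.sqrt ((show ((P - Q)ᵀ * (P - Q)).IsHermitian by simpa using Matrix.isHermitian_conjTranspose_mul_self (P - Q)).eigenvalues i) := by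
  set sP := cong hP.1 (fun i => Real.sqrt (hP.1.eigenvalues i)) with hsP
  set sQ := cong hQ.1 (fun i => Real.sqrt (hQ.1.eigenvalues i)) with hsQ
  have hsP2 : sP * sP = P := sqrt_cong_sq hP
  have hsQ2 : sQ * sQ = Q := sqrt_cong_sq hQ
  have hsPpsd : sP.PosSemidef := by
    rw [hsP]; exact cong_posSemidef hP.1 (fun i => Real.sqrt_nonneg _)
  have hsQpsd : sQ.PosSemidef := by
    rw [hsQ]; exact cong_posSemidef hQ.1 (fun i => Real.sqrt_nonneg _)
  set Δ : Matrix (Fin k) (Fin k) ℝ := sP - sQ with hΔ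
  set T : Matrix (Fin k) (Fin k) ℝ := sP + sQ with hT
  have hΔh : Δ.IsHermitian := hsPpsd.1.sub hsQpsd.1
  set δ := hΔh.eigenvalues with hδ
  set sgn : Fin k → ℝ := fun i => if 0 ≤ δ i then 1 else -1 with hsgn
  set W : Matrix (Fin k) (Fin k) ℝ := cong hΔh sgn with hW
  -- (a) trace identity
  have hΔΔ : Δ * Δ = P + Q - sP*sQ - sQ*sP := by
    rw [hΔ]
    rw [show (sP - sQ) * (sP - sQ) = sP*sP + sQ*sQ - sP*sQ - sQ*sP from by noncomm_ring,
      hsP2, hsQ2]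
  have htraceΔΔ : trace (Δ * Δ) = trace P + trace Q - 2 * trace (sP * sQ) := by
    rw [hΔΔ, trace_sub, trace_sub, trace_add, trace_mul_comm sQ sP]
    ring
  -- (b) Powers-Stormer
  have hWΔ : W * Δ = cong hΔh (fun i => |δ i|) := by
    have e : W * Δ = W * cong hΔh δ := by rw [hδ, cong_eigenvalues]
    rw [e, hW, cong_mul_cong]
    exact cong_congr hΔh fun i => by
      rw [hsgn]; dsimp only
      split
      · next h => rw [one_mul, abs_of_nonneg h]
      · next h => push_neg at h; rw [neg_one_mul, abs_of_neg h]
  have hΔW : Δ * W = cong hΔh (fun i => |δ i|) := by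
    have e : Δ * W = cong hΔh δ * W := by rw [hδ, cong_eigenvalues]
    rw [e, hW, cong_mul_cong]
    exact cong_congr hΔh fun i => by
      rw [hsgn]; dsimp only
      split
      · next h => rw [mul_one, abs_of_nonneg h]
      · next h => push_neg at h; rw [mul_neg_one, abs_of_neg h]
  have hhalf : Δ * T + T * Δ = P + P - (Q + Q) := by
    rw [hΔ, hT, show (sP - sQ) * (sP + sQ) + (sP + sQ) * (sP - sQ)
      = sP*sP + sP*sP - (sQ*sQ + sQ*sQ) from by noncomm_ring, hsP2, hsQ2]
  have htrace2 : trace ((P - Q) * W) = trace (cong hΔh (fun i => |δ i|) * T) := by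
    have c1 : trace (Δ * T * W) = trace (cong hΔh (fun i => |δ i|) * T) := by
      rw [trace_mul_comm (Δ * T) W, ← mul_assoc, hWΔ]
    have c2 : trace (T * Δ * W) = trace (cong hΔh (fun i => |δ i|) * T) := by
      rw [mul_assoc, hΔW, trace_mul_comm]
    have e2 : trace ((Δ * T + T * Δ) * W) = trace ((P + P - (Q + Q)) * W) := by rw [hhalf]
    rw [add_mul, trace_add, c1, c2] at e2
    have e3 : trace ((P + P - (Q + Q)) * W) = 2 * trace ((P - Q) * W) := by
      rw [show (P + P - (Q + Q)) * W = (P-Q)*W + (P-Q)*W from by noncomm_ring, trace_add]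
      ring
    rw [e3] at e2
    linarith
  have htrΔΔ : trace (Δ * Δ) = ∑ i, δ i * δ i := by
    have e : Δ * Δ = cong hΔh δ * cong hΔh δ := by rw [hδ, cong_eigenvalues]
    rw [e, cong_mul_cong, trace_cong]
  have hdiag : ∀ i, |δ i| ≤ (star (hΔh.eigenvectorUnitary : Matrix (Fin k) (Fin k) ℝ) * T *
      (hΔh.eigenvectorUnitary : Matrix (Fin k) (Fin k) ℝ)) i i := by
    intro i
    have hTsubΔ : T - Δ = sQ + sQ := by rw [hT, hΔ]; abel
    have hTaddΔ : T + Δ = sP + sP := by rw [hT, hΔ]; abel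
    have h1 := psd_conj_diag_nonneg hΔh (hTsubΔ ▸ hsQpsd.add hsQpsd) i
    have h2 := psd_conj_diag_nonneg hΔh (hTaddΔ ▸ hsPpsd.add hsPpsd) i
    have expand : ∀ M : Matrix (Fin k) (Fin k) ℝ, ∀ j,
        (star (hΔh.eigenvectorUnitary : Matrix (Fin k) (Fin k) ℝ) * (M + Δ) *
          (hΔh.eigenvectorUnitary : Matrix (Fin k) (Fin k) ℝ)) j j
        = (star (hΔh.eigenvectorUnitary : Matrix (Fin k) (Fin k) ℝ) * M *
          (hΔh.eigenvectorUnitary : Matrix (Fin k) (Fin k) ℝ)) j j + δ j := by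
      intro M j
      rw [Matrix.mul_add, Matrix.add_mul, Matrix.add_apply]
      congr 1
      rw [conj_U_self hΔh, ← hδ, diagonal_apply_eq]
    have e1 : (star (hΔh.eigenvectorUnitary : Matrix (Fin k) (Fin k) ℝ) * (T - Δ) *
        (hΔh.eigenvectorUnitary : Matrix (Fin k) (Fin k) ℝ)) i i
        = (star (hΔh.eigenvectorUnitary : Matrix (Fin k) (Fin k) ℝ) * T *
          (hΔh.eigenvectorUnitary : Matrix (Fin k) (Fin k) ℝ)) i i - δ i := by
      have := expand (T - Δ - Δ + Δ) i
      rw [Matrix.mul_sub, Matrix.sub_mul, Matrix.sub_apply]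
      rw [conj_U_self hΔh, ← hδ, diagonal_apply_eq]
    have e2 : (star (hΔh.eigenvectorUnitary : Matrix (Fin k) (Fin k) ℝ) * (T + Δ) *
        (hΔh.eigenvectorUnitary : Matrix (Fin k) (Fin k) ℝ)) i i
        = (star (hΔh.eigenvectorUnitary : Matrix (Fin k) (Fin k) ℝ) * T *
          (hΔh.eigenvectorUnitary : Matrix (Fin k) (Fin k) ℝ)) i i + δ i := expand T i
    rw [e1] at h1
    rw [e2] at h2
    rw [abs_le]
    constructor <;> linarith
  have hPS : trace (Δ * Δ) ≤ trace ((P - Q) * W) := by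
    rw [htrace2, htrΔΔ, trace_mul_comm, trace_mul_cong]
    apply Finset.sum_le_sum
    intro i _
    calc δ i * δ i = |δ i| * |δ i| := (abs_mul_abs_self (δ i)).symm
      _ ≤ |δ i| * _ := mul_le_mul_of_nonneg_left (hdiag i) (abs_nonneg _)
  -- (c) duality : trace ((P-Q) * W) ≤ nuclear norm
  set S : Matrix (Fin k) (Fin k) ℝ := P - Q with hS
  have hSh : S.IsHermitian := hP.1.sub hQ.1
  set σ := hSh.eigenvalues with hσ
  have hdual : trace (S * W) ≤ ∑ i, |σ i| := by
    have e : trace (S * W) = trace (W * cong hSh σ) := by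
      rw [hσ, cong_eigenvalues, trace_mul_comm]
    rw [e, trace_mul_cong]
    set V : Matrix (Fin k) (Fin k) ℝ := (hSh.eigenvectorUnitary : Matrix (Fin k) (Fin k) ℝ)
      with hV
    set M : Matrix (Fin k) (Fin k) ℝ := star V * W * V with hM
    have hWsym : Wᵀ = W := by rw [hW]; exact cong_transpose hΔh sgn
    have hWW : W * W = 1 := by
      rw [hW, cong_mul_cong]
      rw [show (fun i => sgn i * sgn i) = fun _ => (1:ℝ) from funext fun i => by
        rw [hsgn]; dsimp only; split <;> norm_num]
      exact cong_one hΔh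
    have hMM : M * M = 1 := by
      rw [hM]
      have e1 : star V * W * V * (star V * W * V) = star V * W * (V * star V) * W * V := by
        noncomm_ring
      rw [e1, hV, mul_star_self_U, Matrix.mul_one, mul_assoc _ W W, hWW, Matrix.mul_one,
        star_mul_self_U]
    have hMsym : Mᵀ = M := by
      rw [hM]
      have hVstar : star V = Vᵀ := by
        rw [star_eq_conjTranspose, conjTranspose_eq_transpose_of_trivial]
      rw [transpose_mul, transpose_mul, hVstar, transpose_transpose, hWsym, mul_assoc]
    have hMdiag : ∀ i, |M i i| ≤ 1 := by
      intro i
      have hsum : ∑ j, M i j * M i j = 1 := by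
        have : (M * M) i i = 1 := by rw [hMM, one_apply_eq]
        rw [← this, Matrix.mul_apply]
        congr 1; ext j
        congr 1
        calc M i j = Mᵀ j i := rfl
          _ = M j i := by rw [hMsym]
      have hle : M i i * M i i ≤ 1 := by
        rw [← hsum]
        exact Finset.single_le_sum (f := fun j => M i j * M i j)
          (fun j _ => mul_self_nonneg _) (Finset.mem_univ i)
      nlinarith [abs_nonneg (M i i), sq_abs (M i i), le_abs_self (M i i), neg_abs_le (M i i)]
    apply Finset.sum_le_sum
    intro i _
    calc σ i * M i i ≤ |σ i * M i i| := le_abs_self _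
      _ = |σ i| * |M i i| := abs_mul _ _
      _ ≤ |σ i| * 1 := mul_le_mul_of_nonneg_left (hMdiag i) (abs_nonneg _)
      _ = |σ i| := mul_one _
  have habs_eq : ∑ i, |σ i| =
      ∑ i, Real.sqrt ((show (Sᵀ * S).IsHermitian by simpa using Matrix.isHermitian_conjTranspose_mul_self S).eigenvalues i) := by
    set X : Matrix (Fin k) (Fin k) ℝ := cong hSh (fun i => |σ i|) with hX
    have hNh : (Sᵀ * S).IsHermitian := by simpa using Matrix.isHermitian_conjTranspose_mul_self S
    have hNpsd : (Sᴴ * S).PosSemidef := Matrix.posSemidef_conjTranspose_mul_self S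
    set Y : Matrix (Fin k) (Fin k) ℝ := cong hNh (fun i => Real.sqrt (hNh.eigenvalues i))
      with hY
    have hXpsd : X.PosSemidef := by rw [hX]; exact cong_posSemidef hSh (fun i => abs_nonneg _)
    have hYpsd : Y.PosSemidef := by
      rw [hY]; exact cong_posSemidef hNh (fun i => Real.sqrt_nonneg _)
    have hX2 : X ^ 2 = Sᴴ * S := by
      rw [pow_two, hX, cong_mul_cong]
      rw [show (fun i => |σ i| * |σ i|) = fun i => σ i * σ i from
        funext fun i => abs_mul_abs_self _]
      have e : cong hSh (fun i => σ i * σ i) = cong hSh σ * cong hSh σ := by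
        rw [cong_mul_cong]
      rw [e, hσ, cong_eigenvalues, hSh.eq]
    have hY2 : Y ^ 2 = Sᴴ * S := by
      rw [pow_two, hY, cong_mul_cong]
      rw [show (fun i => Real.sqrt (hNh.eigenvalues i) * Real.sqrt (hNh.eigenvalues i))
        = hNh.eigenvalues from funext fun i => Real.mul_self_sqrt (hNpsd.eigenvalues_nonneg i)]
      exact cong_eigenvalues hNh
    have hXY : X = Y := psd_eq_of_sq_eq_sq hXpsd hYpsd (by rw [hX2, hY2])
    have t1 : trace X = ∑ i, |σ i| := by rw [hX, trace_cong]
    have t2 : trace Y = ∑ i, Real.sqrt (hNh.eigenvalues i) := by rw [hY, trace_cong]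
    rw [← t1, ← t2, hXY]
  calc trace P + trace Q - 2 * trace (sP * sQ) = trace (Δ * Δ) := htraceΔΔ.symm
    _ ≤ trace ((P - Q) * W) := hPS
    _ ≤ ∑ i, |σ i| := hdual
    _ = _ := habs_eq

end LemmaII

section LemmaIII

variable {n d : ℕ}

lemma dp_MT (M : Matrix (Fin n) (Fin d) ℝ) (w : Fin n → ℝ) :
    (Mᵀ *ᵥ w) ⬝ᵥ (Mᵀ *ᵥ w) = w ⬝ᵥ ((M * Mᵀ) *ᵥ w) := by
  conv_rhs => rw [← mulVec_mulVec, dotProduct_mulVec]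
  congr 1
  exact Matrix.mulVec_transpose M w

lemma dp_self_nonneg (x : Fin d → ℝ) : 0 ≤ x ⬝ᵥ x :=
  Finset.sum_nonneg fun i _ => mul_self_nonneg (x i)

lemma scalar_mul_invsqrt {a : ℝ} (ha : 0 ≤ a) : a * (Real.sqrt a)⁻¹ = Real.sqrt a := by
  rcases eq_or_lt_of_le ha with h | h
  · rw [← h]; simp
  · have hs : Real.sqrt a ≠ 0 := ne_of_gt (Real.sqrt_pos.mpr h)
    rw [inv_eq_one_div, mul_one_div, div_eq_iff hs]
    exact (Real.mul_self_sqrt ha).symm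

lemma trace_NC (A B : Matrix (Fin n) (Fin d) ℝ)
    (hP : (A * Aᵀ).PosSemidef) (hQ : (B * Bᵀ).PosSemidef) :
    trace ((Bᵀ * A) * (Aᵀ * cong hP.1 (fun i => (Real.sqrt (hP.1.eigenvalues i))⁻¹) *
      cong hQ.1 (fun i => (Real.sqrt (hQ.1.eigenvalues i))⁻¹) * B))
    = trace (cong hP.1 (fun i => Real.sqrt (hP.1.eigenvalues i)) *
        cong hQ.1 (fun i => Real.sqrt (hQ.1.eigenvalues i))) := by
  have hPp : (A * Aᵀ) * cong hP.1 (fun i => (Real.sqrt (hP.1.eigenvalues i))⁻¹)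
      = cong hP.1 (fun i => Real.sqrt (hP.1.eigenvalues i)) := by
    have e : (A * Aᵀ) * cong hP.1 (fun i => (Real.sqrt (hP.1.eigenvalues i))⁻¹)
        = cong hP.1 hP.1.eigenvalues *
          cong hP.1 (fun i => (Real.sqrt (hP.1.eigenvalues i))⁻¹) := by
      rw [cong_eigenvalues]
    rw [e, cong_mul_cong]
    exact cong_congr hP.1 fun i => scalar_mul_invsqrt (hP.eigenvalues_nonneg i)
  have hQp : cong hQ.1 (fun i => (Real.sqrt (hQ.1.eigenvalues i))⁻¹) * (B * Bᵀ)
      = cong hQ.1 (fun i => Real.sqrt (hQ.1.eigenvalues i)) := by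
    have e : cong hQ.1 (fun i => (Real.sqrt (hQ.1.eigenvalues i))⁻¹) * (B * Bᵀ)
        = cong hQ.1 (fun i => (Real.sqrt (hQ.1.eigenvalues i))⁻¹) *
          cong hQ.1 hQ.1.eigenvalues := by
      rw [cong_eigenvalues]
    rw [e, cong_mul_cong]
    exact cong_congr hQ.1 fun i => by
      rw [mul_comm]
      exact scalar_mul_invsqrt (hQ.eigenvalues_nonneg i)
  have e1 : (Bᵀ * A) * (Aᵀ * cong hP.1 (fun i => (Real.sqrt (hP.1.eigenvalues i))⁻¹) *
      cong hQ.1 (fun i => (Real.sqrt (hQ.1.eigenvalues i))⁻¹) * B)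
      = Bᵀ * (((A * Aᵀ) * cong hP.1 (fun i => (Real.sqrt (hP.1.eigenvalues i))⁻¹) *
        cong hQ.1 (fun i => (Real.sqrt (hQ.1.eigenvalues i))⁻¹)) * B) := by
    simp only [← Matrix.mul_assoc]
  rw [e1, trace_mul_comm]
  have e2 : ((A * Aᵀ) * cong hP.1 (fun i => (Real.sqrt (hP.1.eigenvalues i))⁻¹) *
      cong hQ.1 (fun i => (Real.sqrt (hQ.1.eigenvalues i))⁻¹)) * B * Bᵀ
      = ((A * Aᵀ) * cong hP.1 (fun i => (Real.sqrt (hP.1.eigenvalues i))⁻¹)) *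
        (cong hQ.1 (fun i => (Real.sqrt (hQ.1.eigenvalues i))⁻¹) * (B * Bᵀ)) := by
    simp only [← Matrix.mul_assoc]
  rw [e2, hPp, hQp]

lemma contraction_C (A B : Matrix (Fin n) (Fin d) ℝ)
    (hP : (A * Aᵀ).PosSemidef) (hQ : (B * Bᵀ).PosSemidef) :
    (1 - (Aᵀ * cong hP.1 (fun i => (Real.sqrt (hP.1.eigenvalues i))⁻¹) *
      cong hQ.1 (fun i => (Real.sqrt (hQ.1.eigenvalues i))⁻¹) * B)ᵀ *
      (Aᵀ * cong hP.1 (fun i => (Real.sqrt (hP.1.eigenvalues i))⁻¹) *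
      cong hQ.1 (fun i => (Real.sqrt (hQ.1.eigenvalues i))⁻¹) * B)).PosSemidef := by
  set pP : Matrix (Fin n) (Fin n) ℝ :=
    cong hP.1 (fun i => (Real.sqrt (hP.1.eigenvalues i))⁻¹) with hpP
  set pQ : Matrix (Fin n) (Fin n) ℝ :=
    cong hQ.1 (fun i => (Real.sqrt (hQ.1.eigenvalues i))⁻¹) with hpQ
  set C : Matrix (Fin d) (Fin d) ℝ := Aᵀ * pP * pQ * B with hC
  have hpPsym : pPᵀ = pP := by rw [hpP]; exact cong_transpose hP.1 _
  have hpQsym : pQᵀ = pQ := by rw [hpQ]; exact cong_transpose hQ.1 _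
  set X : Matrix (Fin n) (Fin d) ℝ := pP * A with hX
  set Y : Matrix (Fin n) (Fin d) ℝ := pQ * B with hY
  have hCXY : C = Xᵀ * Y := by
    rw [hC, hX, hY, transpose_mul, hpPsym]
    simp only [← Matrix.mul_assoc]
  -- X * Xᵀ = cong of bounded function
  have hXXT : X * Xᵀ = cong hP.1 (fun i => (Real.sqrt (hP.1.eigenvalues i))⁻¹ *
      (hP.1.eigenvalues i * (Real.sqrt (hP.1.eigenvalues i))⁻¹)) := by
    rw [hX, transpose_mul, hpPsym]
    have e : pP * A * (Aᵀ * pP) = pP * (A * Aᵀ) * pP := by simp only [← Matrix.mul_assoc]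
    rw [e, hpP, cong_mul_mid]
  have hXbound : ∀ w : Fin n → ℝ, w ⬝ᵥ ((X * Xᵀ) *ᵥ w) ≤ w ⬝ᵥ w := by
    intro w
    have hj : ∀ i, 0 ≤ 1 - (Real.sqrt (hP.1.eigenvalues i))⁻¹ *
        (hP.1.eigenvalues i * (Real.sqrt (hP.1.eigenvalues i))⁻¹) := by
      intro i
      rw [mul_comm (hP.1.eigenvalues i), ← mul_assoc]
      rcases eq_or_lt_of_le (hP.eigenvalues_nonneg i) with h | h
      · rw [← h]; norm_num
      · have hs : Real.sqrt (hP.1.eigenvalues i) ≠ 0 := ne_of_gt (Real.sqrt_pos.mpr h)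
        rw [← Real.sqrt_inv]
        rw [show Real.sqrt (hP.1.eigenvalues i)⁻¹ * Real.sqrt (hP.1.eigenvalues i)⁻¹
          = (hP.1.eigenvalues i)⁻¹ from Real.mul_self_sqrt (by positivity)]
        rw [inv_mul_cancel₀ (ne_of_gt h)]
        norm_num
    have hpsd : ((1 : Matrix (Fin n) (Fin n) ℝ) - X * Xᵀ).PosSemidef := by
      rw [hXXT, ← cong_one hP.1, cong_sub]
      exact cong_posSemidef hP.1 fun i => by simpa using hj i
    have h := hpsd.dotProduct_mulVec_nonneg w
    simp only [sub_mulVec, one_mulVec, dotProduct_sub, star_trivial] at h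
    linarith
  -- Z = Yᵀ * Y is idempotent symmetric
  set g : Fin n → ℝ := fun i => (Real.sqrt (hQ.1.eigenvalues i))⁻¹ *
    (Real.sqrt (hQ.1.eigenvalues i))⁻¹ with hg
  have hZdef : Yᵀ * Y = Bᵀ * cong hQ.1 g * B := by
    rw [hY, transpose_mul, hpQsym]
    have e : Bᵀ * pQ * (pQ * B) = Bᵀ * (pQ * pQ) * B := by simp only [← Matrix.mul_assoc]
    rw [e, hpQ, cong_mul_cong, hg]
  set Z : Matrix (Fin d) (Fin d) ℝ := Bᵀ * cong hQ.1 g * B with hZ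
  have hZidem : Z * Z = Z := by
    rw [hZ]
    have e : Bᵀ * cong hQ.1 g * B * (Bᵀ * cong hQ.1 g * B)
        = Bᵀ * (cong hQ.1 g * (B * Bᵀ) * cong hQ.1 g) * B := by simp only [← Matrix.mul_assoc]
    rw [e, cong_mul_mid]
    congr 2
    apply cong_congr
    intro i
    rw [hg]
    dsimp only
    rcases eq_or_lt_of_le (hQ.eigenvalues_nonneg i) with h | h
    · rw [← h]; norm_num
    · have hs : Real.sqrt (hQ.1.eigenvalues i) ≠ 0 := ne_of_gt (Real.sqrt_pos.mpr h)
      have hsq : Real.sqrt (hQ.1.eigenvalues i) * Real.sqrt (hQ.1.eigenvalues i)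
          = hQ.1.eigenvalues i := Real.mul_self_sqrt (hQ.eigenvalues_nonneg i)
      generalize Real.sqrt (hQ.1.eigenvalues i) = s at hs hsq ⊢
      rw [← hsq]
      field_simp
  have hZsym : Zᵀ = Z := by
    rw [hZ, transpose_mul, transpose_mul, transpose_transpose, cong_transpose,
      ← Matrix.mul_assoc]
  have hZbound : ∀ x : Fin d → ℝ, x ⬝ᵥ (Z *ᵥ x) ≤ x ⬝ᵥ x := by
    intro x
    have ha : x ⬝ᵥ (Z *ᵥ x) = (Z *ᵥ x) ⬝ᵥ (Z *ᵥ x) := by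
      conv_lhs => rw [← hZidem]
      rw [show Z * Z = Zᵀ * Z from by rw [hZsym], ← mulVec_mulVec, dotProduct_mulVec,
        vecMul_transpose]
    have hcs := dp_sq_le x (Z *ᵥ x)
    have hb := dp_self_nonneg x
    have ha0 : 0 ≤ x ⬝ᵥ (Z *ᵥ x) := by rw [ha]; exact dp_self_nonneg _
    nlinarith [hcs, hb, ha0, ha]
  -- assemble
  refine PosSemidef.of_dotProduct_mulVec_nonneg ?_ fun x => ?_
  · show (1 - Cᵀ * C)ᴴ = 1 - Cᵀ * C
    simp only [conjTranspose_sub, conjTranspose_mul, conjTranspose_one,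
      conjTranspose_eq_transpose_of_trivial, transpose_sub, transpose_mul, transpose_one,
      transpose_transpose]
  · have key : (C *ᵥ x) ⬝ᵥ (C *ᵥ x) ≤ x ⬝ᵥ x := by
      have e0 : C *ᵥ x = Xᵀ *ᵥ (Y *ᵥ x) := by rw [hCXY, ← mulVec_mulVec]
      rw [e0, dp_MT]
      calc (Y *ᵥ x) ⬝ᵥ ((X * Xᵀ) *ᵥ (Y *ᵥ x)) ≤ (Y *ᵥ x) ⬝ᵥ (Y *ᵥ x) := hXbound _
        _ = x ⬝ᵥ ((Yᵀ * Y) *ᵥ x) := by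
            conv_lhs => rw [show Y = Yᵀᵀ from (transpose_transpose Y).symm]
            rw [dp_MT Yᵀ x, transpose_transpose]
        _ = x ⬝ᵥ (Z *ᵥ x) := by rw [hZdef]
        _ ≤ x ⬝ᵥ x := hZbound x
    have e : star x ⬝ᵥ ((1 - Cᵀ * C) *ᵥ x) = x ⬝ᵥ x - (C *ᵥ x) ⬝ᵥ (C *ᵥ x) := by
      simp only [sub_mulVec, one_mulVec, dotProduct_sub, star_trivial]
      congr 1
      rw [← mulVec_mulVec, dotProduct_mulVec, vecMul_transpose]
    rw [e]
    linarith

end LemmaIII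

section Assembly

variable {n d : ℕ}

lemma frobSq_nonneg (A C : Matrix (Fin n) (Fin d) ℝ) : 0 ≤ frobSq A C :=
  Finset.sum_nonneg fun _ _ => Finset.sum_nonneg fun _ _ => sq_nonneg _

lemma frobSq_formula (A B : Matrix (Fin n) (Fin d) ℝ) (O : Matrix (Fin d) (Fin d) ℝ)
    (hO : O * Oᵀ = 1) :
    frobSq A (B * O) = trace (A*Aᵀ) + trace (B*Bᵀ) - 2 * trace ((Bᵀ*A) * Oᵀ) := by
  have h1 : frobSq A (B*O) = trace ((A - B*O) * (A - B*O)ᵀ) := by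
    unfold frobSq
    simp only [Matrix.trace, Matrix.diag, Matrix.mul_apply, Matrix.transpose_apply,
      Matrix.sub_apply, pow_two]
  rw [h1]
  have e : (A - B*O) * (A - B*O)ᵀ
      = A*Aᵀ - A*(Oᵀ*Bᵀ) - ((B*O)*Aᵀ - B*Bᵀ) := by
    rw [transpose_sub, transpose_mul]
    rw [Matrix.sub_mul, Matrix.mul_sub, Matrix.mul_sub]
    have e0 : B * O * (Oᵀ * Bᵀ) = B * Bᵀ := by
      rw [show B * O * (Oᵀ * Bᵀ) = B * (O * Oᵀ) * Bᵀ from by simp only [← Matrix.mul_assoc],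
        hO, Matrix.mul_one]
    rw [e0]
  rw [e, trace_sub, trace_sub, trace_sub]
  have e2 : trace ((B*O)*Aᵀ) = trace (A*(Oᵀ*Bᵀ)) := by
    rw [← Matrix.trace_transpose ((B*O)*Aᵀ), transpose_mul, transpose_mul, transpose_transpose]
  have e3 : trace (A*(Oᵀ*Bᵀ)) = trace ((Bᵀ*A)*Oᵀ) := by
    rw [show A*(Oᵀ*Bᵀ) = A*Oᵀ*Bᵀ from by simp only [← Matrix.mul_assoc],
      Matrix.trace_mul_cycle]
  rw [e2, e3]
  ring

end Assembly

end LossProof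

/-- **Lemma (loss bounded by the nuclear norm).** For `A, B ∈ ℝ^{n×d}`,
`(1/n) inf_{O ∈ O(d)} ‖A − B O‖_F² ≤ (1/n) ‖A Aᵀ − B Bᵀ‖_*`. -/
theorem lossEll_le_nuclearNorm (n d : ℕ) (hn : 0 < n) (hd : 0 < d)
    (A B : Matrix (Fin n) (Fin d) ℝ) :
    lossEll n d A B ≤ (1 / n) * nuclearNorm (A * Aᵀ - B * Bᵀ) := by
  have hP : (A * Aᵀ).PosSemidef := by
    have := Matrix.posSemidef_self_mul_conjTranspose A
    rwa [conjTranspose_eq_transpose_of_trivial] at this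
  have hQ : (B * Bᵀ).PosSemidef := by
    have := Matrix.posSemidef_self_mul_conjTranspose B
    rwa [conjTranspose_eq_transpose_of_trivial] at this
  have hmain : sInf ((fun O => frobSq A (B * O)) '' {O | O ∈ Matrix.orthogonalGroup (Fin d) ℝ})
      ≤ nuclearNorm (A * Aᵀ - B * Bᵀ) := by
    have hbdd : BddBelow ((fun O => frobSq A (B * O)) ''
        {O | O ∈ Matrix.orthogonalGroup (Fin d) ℝ}) := by
      refine ⟨0, ?_⟩
      rintro v ⟨O, _, rfl⟩
      exact LossProof.frobSq_nonneg A (B * O)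
    have hstep : ∀ ε : ℝ, 0 < ε →
        sInf ((fun O => frobSq A (B * O)) '' {O | O ∈ Matrix.orthogonalGroup (Fin d) ℝ})
          ≤ nuclearNorm (A * Aᵀ - B * Bᵀ) + ε := by
      intro ε hε
      obtain ⟨Z, hZmem, hZtr⟩ := LossProof.exists_orth_approx (Bᵀ * A)
        (Aᵀ * LossProof.cong hP.1 (fun i => (Real.sqrt (hP.1.eigenvalues i))⁻¹) *
          LossProof.cong hQ.1 (fun i => (Real.sqrt (hQ.1.eigenvalues i))⁻¹) * B)
        (LossProof.contraction_C A B hP hQ) (half_pos hε)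
      have hZO : Z * star Z = 1 := Matrix.mem_unitaryGroup_iff.mp hZmem
      have hstarZ : star Z = Zᵀ := by
        rw [star_eq_conjTranspose, conjTranspose_eq_transpose_of_trivial]
      have hOmem : Zᵀ ∈ Matrix.orthogonalGroup (Fin d) ℝ := by
        apply Matrix.mem_unitaryGroup_iff'.mpr
        have hstarO : star Zᵀ = Z := by
          rw [star_eq_conjTranspose, conjTranspose_eq_transpose_of_trivial,
            transpose_transpose]
        rw [hstarO, ← hstarZ]
        exact hZO
      have hZZT : Zᵀ * Zᵀᵀ = 1 := by
        rw [transpose_transpose, ← hstarZ]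
        exact Matrix.mem_unitaryGroup_iff'.mp hZmem
      have hfrob : frobSq A (B * Zᵀ) = trace (A*Aᵀ) + trace (B*Bᵀ)
          - 2 * trace ((Bᵀ*A) * Z) := by
        rw [LossProof.frobSq_formula A B Zᵀ hZZT, transpose_transpose]
      have htrNC := LossProof.trace_NC A B hP hQ
      have hps := LossProof.powers_stormer hP hQ
      have hle : frobSq A (B * Zᵀ) ≤ nuclearNorm (A * Aᵀ - B * Bᵀ) + ε := by
        rw [hfrob]
        have h2 : trace ((Bᵀ*A) *
            (Aᵀ * LossProof.cong hP.1 (fun i => (Real.sqrt (hP.1.eigenvalues i))⁻¹) *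
              LossProof.cong hQ.1 (fun i => (Real.sqrt (hQ.1.eigenvalues i))⁻¹) * B))
            ≤ trace ((Bᵀ*A) * Z) + ε/2 := hZtr
      -- combine
        have h3 : trace (A*Aᵀ) + trace (B*Bᵀ)
            - 2 * trace (LossProof.cong hP.1 (fun i => Real.sqrt (hP.1.eigenvalues i)) *
              LossProof.cong hQ.1 (fun i => Real.sqrt (hQ.1.eigenvalues i)))
            ≤ nuclearNorm (A * Aᵀ - B * Bᵀ) := hps
        rw [← htrNC] at h3
        linarith
      have hinf : sInf ((fun O => frobSq A (B * O)) '' {O | O ∈ Matrix.orthogonalGroup (Fin d) ℝ})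
          ≤ frobSq A (B * Zᵀ) := by
        exact csInf_le hbdd ⟨Zᵀ, hOmem, rfl⟩
      linarith
    by_contra hcon
    push_neg at hcon
    have := hstep ((sInf ((fun O => frobSq A (B * O)) '' {O | O ∈ Matrix.orthogonalGroup (Fin d) ℝ})
      - nuclearNorm (A * Aᵀ - B * Bᵀ))/2) (by linarith)
    linarith
  unfold lossEll
  apply mul_le_mul_of_nonneg_left hmain (by positivity)

end
end

section
/- There is an absolute constant C > 0 such that for all positive integers n ≤ d: (n(n−1)/4)·log π + Σ_{i=1}^{n} log Γ((d+1−i)/2) ≥ (n²/4)·log(π e) − nd/2 + Σ_{i=1}^{n} ((d−i)/2)·log((d+1−i)/2) − C·n, where Γ is the real Gamma function and log is the natural logarithm. (The left-hand side equals log Γ_n(d/2), the logarithm of the multivariate gamma function.) -/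
/-!
Every factor obeys the Stirling-type bound `log Γ(y) ≥ (y - 1/2) log y - y` for all `y > 0`:
log-convexity of `Γ` on `[y, y + 1]` compares `Γ(y)` with `⌊y⌋!`, to which Stirling's lower bound
for factorials applies. Summing over `y = (d + 1 - i)/2`, the terms quadratic in `n` cancel
exactly and what is lost is `n (1 + log π) / 4 ≤ n`.
-/

open Real Finset

theorem Finset.sum_Icc_one_natCast_mul_two {R : Type*} [CommSemiring R] (n : ℕ) :
    (∑ i ∈ Icc 1 n, (i : R)) * 2 = n * (n + 1) := by
  induction n with
  | zero => simp
  | succ n ih =>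
    rw [sum_Icc_succ_top (by omega), add_mul, ih]
    push_cast
    ring

namespace Real

theorem log_factorial_sub_le_log_Gamma {y : ℝ} {m : ℕ} (hy : 0 < y) (hmy : m ≤ y)
    (hym : y ≤ m + 1) : log m.factorial - (m + 1 - y) * log y ≤ log (Gamma y) := by
  have hconv := convexOn_log_Gamma.2 (Set.mem_Ioi.2 hy) (Set.mem_Ioi.2 (by linarith : 0 < y + 1))
    (by linarith : 0 ≤ y - m) (by linarith : 0 ≤ m + 1 - y) (by ring)
  rw [smul_eq_mul, smul_eq_mul, show (y - m) * y + (m + 1 - y) * (y + 1) = m + 1 by ring]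
    at hconv
  simp only [smul_eq_mul, Function.comp_apply, Gamma_nat_eq_factorial, Gamma_add_one hy.ne',
    log_mul hy.ne' (Gamma_pos_of_pos hy).ne'] at hconv
  linarith

theorem sub_half_mul_log_sub_le_log_Gamma_of_le_one {y : ℝ} (hy : 0 < y) (hy1 : y ≤ 1) :
    (y - 1 / 2) * log y - y ≤ log (Gamma y) := by
  have hGamma := log_factorial_sub_le_log_Gamma (m := 0) hy (by simpa using hy.le)
    (by simpa using hy1)
  have hlog := log_le_sub_one_of_pos hy
  simp only [Nat.factorial_zero, Nat.cast_one, log_one, Nat.cast_zero] at hGamma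
  linarith

theorem sub_half_mul_log_sub_le_log_Gamma_of_one_le {y : ℝ} (hy : 1 ≤ y) :
    (y - 1 / 2) * log y - y ≤ log (Gamma y) := by
  set m := ⌊y⌋₊
  have hm1 : 1 ≤ m := Nat.one_le_floor_iff y |>.2 hy
  have hm : (1 : ℝ) ≤ m := by exact_mod_cast hm1
  have hmy : (m : ℝ) ≤ y := Nat.floor_le (by linarith)
  have hym : y < m + 1 := Nat.lt_floor_add_one y
  have hGamma := log_factorial_sub_le_log_Gamma (by linarith) hmy hym.le
  have hStirling := Stirling.le_log_factorial_stirling (n := m) (by omega)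
  -- `log (y / m) ≤ (y - m) / m` and `y - m < 1` bound the loss in replacing `log y` by `log m`
  have hratio : (m + 1 / 2) * (log y - log m) ≤ y - m + 1 / 2 := by
    have h := log_le_sub_one_of_pos (by positivity : 0 < y / m)
    rw [log_div (by positivity) (by positivity)] at h
    have hsplit : (m + 1 / 2) * (y / m - 1) = y - m + (y - m) / (2 * m) := by
      field_simp
    have hfrac : (y - m) / (2 * m) ≤ 1 / 2 := by
      rw [div_le_iff₀ (by positivity)]; linarith
    nlinarith
  have h2pi : 1 ≤ log (2 * π) := by
    rw [← log_exp 1]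
    exact log_le_log (exp_pos 1) (by linarith [exp_one_lt_d9, pi_gt_three])
  linarith

theorem sub_half_mul_log_sub_le_log_Gamma {y : ℝ} (hy : 0 < y) :
    (y - 1 / 2) * log y - y ≤ log (Gamma y) := by
  rcases le_total y 1 with hy1 | hy1
  · exact sub_half_mul_log_sub_le_log_Gamma_of_le_one hy hy1
  · exact sub_half_mul_log_sub_le_log_Gamma_of_one_le hy1

end Real

/-- **Lower bound on the logarithm of the multivariate gamma function.**
There is an absolute constant `C > 0` such that for all positive integers `n ≤ d`,
`(n(n−1)/4) log π + Σ_{i=1}^n log Γ((d+1−i)/2)`, which equals `log Γ_n(d/2)`,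
is at least `(n²/4) log(π e) − nd/2 + Σ_{i=1}^n ((d−i)/2) log((d+1−i)/2) − C n`. -/
theorem log_multivariate_gamma_lower_bound :
    ∃ C : ℝ, 0 < C ∧
      ∀ n d : ℕ, 1 ≤ n → n ≤ d →
        (n : ℝ) * ((n : ℝ) - 1) / 4 * Real.log Real.pi
            + ∑ i ∈ Finset.Icc 1 n, Real.log (Real.Gamma (((d : ℝ) + 1 - (i : ℝ)) / 2))
          ≥ (n : ℝ) ^ 2 / 4 * Real.log (Real.pi * Real.exp 1) - (n : ℝ) * d / 2
            + (∑ i ∈ Finset.Icc 1 n, ((d : ℝ) - (i : ℝ)) / 2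
                * Real.log (((d : ℝ) + 1 - (i : ℝ)) / 2))
            - C * n := by
  refine ⟨1, one_pos, fun n d _ hnd => ?_⟩
  have hterm : ∀ i ∈ Icc 1 n, ((d : ℝ) - i) / 2 * log (((d : ℝ) + 1 - i) / 2)
      - ((d : ℝ) + 1 - i) / 2 ≤ log (Gamma (((d : ℝ) + 1 - i) / 2)) := by
    intro i hi
    have hid : (i : ℝ) ≤ d := by exact_mod_cast (mem_Icc.1 hi).2.trans hnd
    convert sub_half_mul_log_sub_le_log_Gamma (y := ((d : ℝ) + 1 - i) / 2) (by linarith)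
      using 2
    ring
  have hsum := sum_le_sum hterm
  have hgauss : ∑ i ∈ Icc 1 n, ((d : ℝ) + 1 - i) / 2 = n * (d + 1) / 2 - n * (n + 1) / 4 := by
    have h := sum_Icc_one_natCast_mul_two (R := ℝ) n
    simp only [← sum_div, sum_sub_distrib, sum_const, Nat.card_Icc, nsmul_eq_mul]
    push_cast
    linarith
  have hlogpi : log π ≤ 3 := by linarith [log_le_sub_one_of_pos pi_pos, pi_lt_d2]
  rw [sum_sub_distrib, hgauss] at hsum
  rw [log_mul pi_pos.ne' (exp_ne_zero 1), log_exp]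
  linarith [mul_nonneg (Nat.cast_nonneg n : (0 : ℝ) ≤ n) (sub_nonneg.2 hlogpi)]
end
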